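/- Let (A_v)_{v ∈ V} be a finite family of arcs on the circle ℝ/ℤ and let G be its circular-arc intersection graph. Let t be the maximum cardinality of a subset of V inducing a triangle-free subgraph of G, and let b be the maximum cardinality of a subset of V inducing a bipartite (2-colorable) subgraph of G. Then t − 1 ≤ b ≤ t. -/

import Mathlib

/-! A 2-colourable induced subgraph is triangle-free, so `b ≤ t`. Conversely, let `S` induce a
triangle-free subgraph. An arc of length at least 1 is the whole circle, so if `S` contains one,
the remaining arcs of `S` are pairwise disjoint. Otherwise pick an arc `A₀` of `S` with left end
`p`: at most one other arc of `S` passes through `p`, and after discarding it, cutting the circle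
at `p` turns the remaining arcs into real intervals in `[p, p + 1)` with the same intersection
pattern. A triangle-free interval graph is a forest: ordering the intervals by left endpoint, two
earlier neighbours of an interval would both contain its left endpoint, so every vertex has at
most one earlier neighbour, which rules out cycles. -/

/-- The intersection graph of a family of sets `A : V → Set X`: distinct indices
`u, v` are adjacent iff `A u ∩ A v ≠ ∅`. -/
def intersectionGraph {V X : Type*} (A : V → Set X) : SimpleGraph V where
  Adj u v := u ≠ v ∧ (A u ∩ A v).Nonempty
  symm := by
    constructor
    rintro u v ⟨hne, x, hx1, hx2⟩
    exact ⟨hne.symm, x, hx2, hx1⟩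
  loopless := by
    constructor
    rintro u ⟨hne, -⟩
    exact hne rfl

/-- The arc on the circle `ℝ/ℤ` obtained by projecting the closed real interval `[a, b]`. -/
def arc (a b : ℝ) : Set (AddCircle (1 : ℝ)) :=
  (fun x : ℝ => (x : AddCircle (1 : ℝ))) '' Set.Icc a b

open Set Function

namespace SimpleGraph

/-- The largest vertex of a cycle would have two distinct smaller neighbours on it. -/
theorem isAcyclic_of_injective_of_subsingleton_adj_lt {V β : Type*} [LinearOrder β]
    {G : SimpleGraph V} (f : V → β) (hf : Injective f)
    (h : ∀ v, {u | f u < f v ∧ G.Adj u v}.Subsingleton) : G.IsAcyclic := by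
  classical
  intro v c hc
  obtain ⟨m, hm, hmax⟩ := c.support.toFinset.exists_max_image f ⟨v, by simp⟩
  rw [List.mem_toFinset] at hm
  have hc' := hc.rotate hm
  have lt_of_adj : ∀ {i}, G.Adj ((c.rotate m hm).getVert i) m →
      f ((c.rotate m hm).getVert i) < f m := fun {i} hadj =>
    (hmax _ (List.mem_toFinset.2 ((c.mem_support_rotate_iff m hm).1
      (Walk.getVert_mem_support _ i)))).lt_of_ne (hf.ne hadj.ne)
  have hsnd := (Walk.adj_snd hc'.not_nil).symm
  have hpen := Walk.adj_penultimate hc'.not_nil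
  exact hc'.snd_ne_penultimate (h m ⟨lt_of_adj hsnd, hsnd⟩ ⟨lt_of_adj hpen, hpen⟩)

end SimpleGraph

section IntersectionGraph

variable {V X : Type*}

theorem intersectionGraph_induce (A : V → Set X) (s : Set V) :
    (intersectionGraph A).induce s = intersectionGraph fun v : s => A v := by
  ext u v
  simp [intersectionGraph, Subtype.ext_iff]

theorem intersectionGraph_image_of_injOn {Y : Type*} {A : V → Set X} {f : X → Y} {U : Set X}
    (hf : InjOn f U) (hA : ∀ v, A v ⊆ U) :
    (intersectionGraph fun v => f '' A v) = intersectionGraph A := by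
  ext u v
  simp only [intersectionGraph, ← hf.image_inter (hA u) (hA v), image_nonempty]

theorem intersectionGraph.eq_or_eq_or_eq_of_cliqueFree_three {A : V → Set X}
    (h : (intersectionGraph A).CliqueFree 3) {u v w : V} {x : X} (hu : x ∈ A u)
    (hv : x ∈ A v) (hw : x ∈ A w) : u = v ∨ u = w ∨ v = w := by
  classical
  by_contra! hne
  obtain ⟨huv, huw, hvw⟩ := hne
  exact h {u, v, w} (SimpleGraph.is3Clique_triple_iff.2
    ⟨⟨huv, x, hu, hv⟩, ⟨huw, x, hu, hw⟩, ⟨hvw, x, hv, hw⟩⟩)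

theorem intersectionGraph.eq_or_eq_or_eq_of_cliqueFree_three_induce {A : V → Set X} {s : Set V}
    (h : ((intersectionGraph A).induce s).CliqueFree 3) {u v w : V} {x : X} (hus : u ∈ s)
    (hvs : v ∈ s) (hws : w ∈ s) (hu : x ∈ A u) (hv : x ∈ A v) (hw : x ∈ A w) :
    u = v ∨ u = w ∨ v = w := by
  rw [intersectionGraph_induce] at h
  simpa only [Subtype.mk.injEq] using eq_or_eq_or_eq_of_cliqueFree_three h
    (u := ⟨u, hus⟩) (v := ⟨v, hvs⟩) (w := ⟨w, hws⟩) hu hv hw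

theorem intersectionGraph_Icc_isAcyclic {α : Type*} [LinearOrder α] (L R : V → α)
    (h : (intersectionGraph fun v => Icc (L v) (R v)).CliqueFree 3) :
    (intersectionGraph fun v => Icc (L v) (R v)).IsAcyclic := by
  let : LinearOrder V := IsWellOrder.linearOrder WellOrderingRel
  refine SimpleGraph.isAcyclic_of_injective_of_subsingleton_adj_lt (fun v => toLex (L v, v))
    (fun u v huv => (Prod.mk.inj (toLex.injective huv)).2) fun v u hu u' hu' => ?_
  have mem_of_lt : ∀ {u}, toLex (L u, u) < toLex (L v, v) →
      (intersectionGraph fun v => Icc (L v) (R v)).Adj u v → L v ∈ Icc (L u) (R u) := by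
    rintro u hlt ⟨-, x, hxu, hxv⟩
    exact ⟨Prod.Lex.monotone_fst _ _ hlt.le, hxv.1.trans hxu.2⟩
  have hv : L v ∈ Icc (L v) (R v) := by
    obtain ⟨-, x, -, hxv⟩ := hu.2
    exact ⟨le_rfl, hxv.1.trans hxv.2⟩
  rcases intersectionGraph.eq_or_eq_or_eq_of_cliqueFree_three h (mem_of_lt hu.1 hu.2)
    (mem_of_lt hu'.1 hu'.2) hv with e | e | e
  exacts [e, (hu.2.ne e).elim, (hu'.2.ne e).elim]

end IntersectionGraph

theorem AddCircle.injOn_coe_Ico {𝕜 : Type*} [AddCommGroup 𝕜] [LinearOrder 𝕜]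
    [IsOrderedAddMonoid 𝕜] [Archimedean 𝕜] (p : 𝕜) [Fact (0 < p)] (a : 𝕜) :
    InjOn ((↑) : 𝕜 → AddCircle p) (Ico a (a + p)) := fun _ hx _ hy h =>
  (AddCircle.coe_eq_coe_iff_of_mem_Ico hx hy).1 h

theorem sub_floor_sub_mem_Ico {α : Type*} [CommRing α] [LinearOrder α] [IsStrictOrderedRing α]
    [FloorRing α] (x c : α) : x - ⌊x - c⌋ ∈ Ico c (c + 1) := by
  constructor <;> linarith [Int.floor_le (x - c), Int.lt_floor_add_one (x - c)]

theorem arc_sub_intCast (a b : ℝ) (k : ℤ) : arc (a - k) (b - k) = arc a b := by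
  rw [arc, arc, ← image_sub_const_Icc, image_image]
  exact congrArg (· '' _) (funext fun x => by simp)

theorem arc_eq_univ {a b : ℝ} (h : a + 1 ≤ b) : arc a b = univ := by
  refine eq_univ_of_forall fun y => ?_
  induction y using QuotientAddGroup.induction_on with | H x => ?_
  obtain ⟨hl, hr⟩ := sub_floor_sub_mem_Ico x a
  exact ⟨x - ⌊x - a⌋, ⟨hl, by linarith⟩, by simp⟩

theorem Icc_sub_floor_subset_Ico_of_notMem_arc {a b c : ℝ} (hab : a ≤ b)
    (h : (c : AddCircle (1 : ℝ)) ∉ arc a b) :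
    Icc (a - ⌊a - c⌋) (b - ⌊a - c⌋) ⊆ Ico c (c + 1) := by
  obtain ⟨hl, hr⟩ := sub_floor_sub_mem_Ico a c
  refine (Icc_subset_Ico_iff (by linarith)).2 ⟨hl, lt_of_not_ge fun hb => h ?_⟩
  exact ⟨c + 1 + ⌊a - c⌋, ⟨by linarith, by linarith⟩, by simp⟩

theorem intersectionGraph_arc_eq_Icc {W : Type*} (a b : W → ℝ) (k : W → ℤ) {c : ℝ}
    (h : ∀ v, Icc (a v - k v) (b v - k v) ⊆ Ico c (c + 1)) :
    (intersectionGraph fun v => arc (a v) (b v)) =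
      intersectionGraph fun v => Icc (a v - k v) (b v - k v) :=
  calc (intersectionGraph fun v => arc (a v) (b v))
      = intersectionGraph fun v => arc (a v - k v) (b v - k v) := by simp only [arc_sub_intCast]
    _ = _ := intersectionGraph_image_of_injOn (AddCircle.injOn_coe_Ico 1 c) h

open Finset

theorem exists_subset_colorable_two_of_cliqueFree_three_of_lt {V : Type*} {a b : V → ℝ}
    (hab : ∀ v, a v ≤ b v) {S : Finset V}
    (hS : ((intersectionGraph fun v => arc (a v) (b v)).induce (S : Set V)).CliqueFree 3)
    (hshort : ∀ v ∈ S, b v < a v + 1) {v₀ : V} (hv₀ : v₀ ∈ S) :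
    ∃ S' ⊆ S, #S ≤ #S' + 1 ∧
      ((intersectionGraph fun v => arc (a v) (b v)).induce (S' : Set V)).Colorable 2 := by
  classical
  set p : AddCircle (1 : ℝ) := ↑(a v₀)
  have hp₀ : p ∈ arc (a v₀) (b v₀) := ⟨a v₀, ⟨le_rfl, hab v₀⟩, rfl⟩
  set S' := S.filter fun v => v = v₀ ∨ p ∉ arc (a v) (b v)
  have hS' : S' ⊆ S := filter_subset _ _
  refine ⟨S', hS', ?_, ?_⟩
  · have hrest : #(S.filter fun v => ¬(v = v₀ ∨ p ∉ arc (a v) (b v))) ≤ 1 := by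
      refine card_le_one.2 fun u hu w hw => ?_
      simp only [mem_filter, not_or, not_not] at hu hw
      rcases intersectionGraph.eq_or_eq_or_eq_of_cliqueFree_three_induce hS hv₀ hu.1 hw.1 hp₀
        hu.2.2 hw.2.2 with h | h | h
      exacts [(hu.2.1 h.symm).elim, (hw.2.1 h.symm).elim, h]
    have : #S' + #(S.filter fun v => ¬(v = v₀ ∨ p ∉ arc (a v) (b v))) = #S :=
      card_filter_add_card_filter_not _
    omega
  -- cut the circle at `p`: each arc of `S'` lifts to an interval in `[a v₀, a v₀ + 1)`
  have hIco : ∀ v : (S' : Set V),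
      Icc (a v - ⌊a v - a v₀⌋) (b v - ⌊a v - a v₀⌋) ⊆ Ico (a v₀) (a v₀ + 1) := by
    rintro ⟨v, hv⟩
    rcases (mem_filter.1 hv).2 with rfl | hpv
    · simpa using Icc_subset_Ico_right (hshort v hv₀)
    · exact Icc_sub_floor_subset_Ico_of_notMem_arc (hab v) hpv
  have hG : (intersectionGraph fun v => arc (a v) (b v)).induce (S' : Set V) =
      intersectionGraph fun v : (S' : Set V) =>
        Icc (a v - ⌊a v - a v₀⌋) (b v - ⌊a v - a v₀⌋) := by
    rw [intersectionGraph_induce, intersectionGraph_arc_eq_Icc _ _ _ hIco]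
  rw [hG]
  refine (intersectionGraph_Icc_isAcyclic _ _ ?_).colorable_two
  rw [← hG]
  exact hS.comap (SimpleGraph.induceHomOfLE _ (coe_subset.2 hS')).isContained

theorem exists_subset_colorable_two_of_cliqueFree_three {V : Type*} {a b : V → ℝ}
    (hab : ∀ v, a v ≤ b v) {S : Finset V}
    (hS : ((intersectionGraph fun v => arc (a v) (b v)).induce (S : Set V)).CliqueFree 3) :
    ∃ S' ⊆ S, #S ≤ #S' + 1 ∧
      ((intersectionGraph fun v => arc (a v) (b v)).induce (S' : Set V)).Colorable 2 := by
  classical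
  by_cases hlong : ∃ v ∈ S, a v + 1 ≤ b v
  · obtain ⟨v₁, hv₁, hlong⟩ := hlong
    refine ⟨S.erase v₁, erase_subset _ _, by rw [card_erase_add_one hv₁],
      ⟨.mk (fun _ => 0) fun {u w} huw => ?_⟩⟩
    obtain ⟨hne, x, hxu, hxw⟩ := huw
    have hx₁ : x ∈ arc (a v₁) (b v₁) := arc_eq_univ hlong ▸ mem_univ x
    rcases intersectionGraph.eq_or_eq_or_eq_of_cliqueFree_three_induce hS hv₁
      (mem_of_mem_erase u.2) (mem_of_mem_erase w.2) hx₁ hxu hxw with h | h | h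
    exacts [(ne_of_mem_erase u.2 h.symm).elim, (ne_of_mem_erase w.2 h.symm).elim, (hne h).elim]
  push Not at hlong
  obtain rfl | ⟨v₀, hv₀⟩ := S.eq_empty_or_nonempty
  · exact ⟨∅, subset_rfl, by simp, by rw [coe_empty]; exact .of_isEmpty 2⟩
  exact exists_subset_colorable_two_of_cliqueFree_three_of_lt hab hS hlong hv₀

theorem stmt6_general {V : Type*} (a b : V → ℝ) (hab : ∀ v, a v ≤ b v)
    (t bp : ℕ)
    (ht : IsGreatest {n : ℕ | ∃ S : Finset V, S.card = n ∧
      ((intersectionGraph fun v => arc (a v) (b v)).induce (↑S : Set V)).CliqueFree 3} t)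
    (hb : IsGreatest {n : ℕ | ∃ S : Finset V, S.card = n ∧
      ((intersectionGraph fun v => arc (a v) (b v)).induce (↑S : Set V)).Colorable 2} bp) :
    t ≤ bp + 1 ∧ bp ≤ t := by
  constructor
  · obtain ⟨S, rfl, hS⟩ := ht.1
    obtain ⟨S', -, hcard, hcol⟩ := exists_subset_colorable_two_of_cliqueFree_three hab hS
    exact hcard.trans (Nat.add_le_add_right (hb.2 ⟨S', rfl, hcol⟩) 1)
  · obtain ⟨T, rfl, hT⟩ := hb.1
    exact ht.2 ⟨T, rfl, hT.cliqueFree (by norm_num)⟩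

theorem stmt6 {V : Type*} [Fintype V] (a b : V → ℝ) (hab : ∀ v, a v ≤ b v)
    (t bp : ℕ)
    (ht : IsGreatest {n : ℕ | ∃ S : Finset V, S.card = n ∧
      ((intersectionGraph fun v => arc (a v) (b v)).induce (↑S : Set V)).CliqueFree 3} t)
    (hb : IsGreatest {n : ℕ | ∃ S : Finset V, S.card = n ∧
      ((intersectionGraph fun v => arc (a v) (b v)).induce (↑S : Set V)).Colorable 2} bp) :
    t ≤ bp + 1 ∧ bp ≤ t :=
  stmt6_general a b hab t bp ht hb
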